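/- The curves x⁴ − x²y² + Ky⁴ = 1, K < 1/4, are not singular at infinity: for every real number K < 1/4 and every point p ∈ ℝ² with p ≠ 0, p in the closure of the cone ℝ_{>0}·H_{0,K}, and h_{0,K}(p) = 0, the differential of h_{0,K} at p is nonzero. -/

import Mathlib

/-!
At a singular zero `p` of `h = x⁴ − x²y² + Ky⁴`, the equation `∂ₓh = 0` forces either `x = 0` or
`y² = 2x²`; in the latter case `h(p) = (4K − 1)x⁴ ≠ 0`. So `x = 0`, and then `h(p) = Ky⁴ = 0`
with `y ≠ 0` gives `K = 0`. But for `K = 0` the curve `x²(x² − y²) = 1` lies in the closed,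
scale-invariant double cone `y² ≤ x²`, which meets the `y`-axis only at the origin.
-/

noncomputable section
open Matrix

/-- `h_{L,K}(x,y) = x⁴ − x²y² + L·x·y³ + K·y⁴`. -/
def hLK (L K : ℝ) (v : Fin 2 → ℝ) : ℝ :=
  v 0 ^ 4 - v 0 ^ 2 * v 1 ^ 2 + L * v 0 * v 1 ^ 3 + K * v 1 ^ 4

/-- Determinant of the Hessian matrix of `f : ℝ² → ℝ` at `p`. -/
def hessDet2 (f : (Fin 2 → ℝ) → ℝ) (p : Fin 2 → ℝ) : ℝ :=
  Matrix.det (Matrix.of fun i j : Fin 2 =>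
    iteratedFDeriv ℝ 2 f p ![Pi.single i 1, Pi.single j 1])

/-- `H_{L,K}`: the connected component containing `(1,0)` of
`{p ∈ ℝ² : h_{L,K}(p) = 1 and p is a hyperbolic point of h_{L,K}}`. -/
def Hcurve (L K : ℝ) : Set (Fin 2 → ℝ) :=
  connectedComponentIn {p | hLK L K p = 1 ∧ hessDet2 (hLK L K) p < 0} ![1, 0]

open Set

theorem hasFDerivAt_hLK (L K : ℝ) (p : Fin 2 → ℝ) :
    HasFDerivAt (hLK L K)
      ((4 * p 0 ^ 3 - 2 * p 0 * p 1 ^ 2 + L * p 1 ^ 3) •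
          (ContinuousLinearMap.proj 0 : (Fin 2 → ℝ) →L[ℝ] ℝ) +
        (-2 * p 0 ^ 2 * p 1 + 3 * L * p 0 * p 1 ^ 2 + 4 * K * p 1 ^ 3) •
          ContinuousLinearMap.proj 1) p := by
  have h0 := hasFDerivAt_apply (𝕜 := ℝ) (F' := fun _ : Fin 2 => ℝ) 0 p
  have h1 := hasFDerivAt_apply (𝕜 := ℝ) (F' := fun _ : Fin 2 => ℝ) 1 p
  refine ((((h0.pow 4).sub ((h0.pow 2).mul (h1.pow 2))).add
    ((h0.const_mul L).mul (h1.pow 3))).add ((h1.pow 4).const_mul K)).congr_fderiv ?_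
  ext v
  simp only [Nat.add_one_sub_one, nsmul_eq_mul, Nat.cast_ofNat, pow_one, _root_.add_apply,
    _root_.sub_apply, _root_.smul_apply, ContinuousLinearMap.proj_apply, smul_eq_mul]
  ring

theorem fderiv_hLK_apply_single_zero (L K : ℝ) (p : Fin 2 → ℝ) :
    fderiv ℝ (hLK L K) p (Pi.single 0 1) = 4 * p 0 ^ 3 - 2 * p 0 * p 1 ^ 2 + L * p 1 ^ 3 := by
  simp [(hasFDerivAt_hLK L K p).fderiv]

theorem fst_eq_zero_of_hLK_eq_zero_of_partial_fst {K : ℝ} (hK : K < 1 / 4) {p : Fin 2 → ℝ}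
    (hz : hLK 0 K p = 0) (hx : 4 * p 0 ^ 3 - 2 * p 0 * p 1 ^ 2 = 0) : p 0 = 0 := by
  by_contra hp
  have hy : p 1 ^ 2 = 2 * p 0 ^ 2 := by
    have : p 0 * (4 * p 0 ^ 2 - 2 * p 1 ^ 2) = 0 := by linear_combination hx
    linarith [(mul_eq_zero.mp this).resolve_left hp]
  have : (4 * K - 1) * p 0 ^ 4 = 0 := by
    unfold hLK at hz
    linear_combination hz - (K * (p 1 ^ 2 + 2 * p 0 ^ 2) - p 0 ^ 2) * hy
  rcases mul_eq_zero.mp this with h | h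
  · linarith
  · exact hp (pow_eq_zero_iff four_ne_zero |>.mp h)

theorem sq_snd_le_sq_fst_of_hLK_zero_zero_eq_one {q : Fin 2 → ℝ} (h : hLK 0 0 q = 1) :
    q 1 ^ 2 ≤ q 0 ^ 2 := by
  unfold hLK at h
  nlinarith [sq_nonneg (q 0)]

theorem closure_posCone_subset {E : Type*} [TopologicalSpace E] [SMul ℝ E] {S T : Set E}
    (hT : IsClosed T) (hST : S ⊆ T) (hsmul : ∀ l : ℝ, 0 < l → ∀ x ∈ T, l • x ∈ T) :
    closure {x | ∃ l : ℝ, 0 < l ∧ ∃ q ∈ S, x = l • q} ⊆ T :=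
  hT.closure_subset_iff.2 <| by
    rintro _ ⟨l, hl, q, hq, rfl⟩
    exact hsmul l hl q (hST hq)

/-- **The curves `x⁴ − x²y² + Ky⁴ = 1` with `K < 1/4` are not singular at infinity.**
For every `K < 1/4` and every nonzero point `p` in the closure of the cone
`ℝ_{>0}·H_{0,K}` with `h_{0,K}(p) = 0`, the differential of `h_{0,K}` at `p` is nonzero. -/
theorem family_d_not_singular_at_infinity (K : ℝ) (hK : K < 1/4)
    (p : Fin 2 → ℝ) (hp0 : p ≠ 0)
    (hpc : p ∈ closure {x : Fin 2 → ℝ | ∃ l : ℝ, 0 < l ∧ ∃ q ∈ Hcurve 0 K, x = l • q})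
    (hpz : hLK 0 K p = 0) :
    fderiv ℝ (hLK 0 K) p ≠ 0 := by
  intro hf
  have hx0 : p 0 = 0 := fst_eq_zero_of_hLK_eq_zero_of_partial_fst hK hpz <| by
    simpa [hf] using (fderiv_hLK_apply_single_zero 0 K p).symm
  have hy0 : p 1 ≠ 0 := fun hy0 => hp0 (funext (Fin.forall_fin_two.2 ⟨hx0, hy0⟩))
  obtain rfl : K = 0 := by
    have : K * p 1 ^ 4 = 0 := by simpa [hLK, hx0] using hpz
    exact (mul_eq_zero.mp this).resolve_right (pow_ne_zero 4 hy0)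
  have hcone : p ∈ {v : Fin 2 → ℝ | v 1 ^ 2 ≤ v 0 ^ 2} :=
    closure_posCone_subset
      (isClosed_le (by fun_prop) (by fun_prop))
      (fun q hq => sq_snd_le_sq_fst_of_hLK_zero_zero_eq_one (connectedComponentIn_subset _ _ hq).1)
      (fun l _ v hv => by
        simpa only [mem_ofPred_eq, Pi.smul_apply, smul_eq_mul, mul_pow]
          using mul_le_mul_of_nonneg_left hv (sq_nonneg l))
      hpc
  simp [hx0, hy0] at hcone
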